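/- arXiv:1502.06007 — 5 statements merged into one kernel-verified Lean document; each statement's English description precedes it below -/
import Mathlib

section
/- Let N and d_1, …, d_K be natural numbers with d_i ≤ N for every i and Σ_{i=1}^K d_i = 2N. Then there exist subspaces V_1, …, V_K of the complex vector space ℂ^N such that (V_1, …, V_K) is a feasible strategy for (K, N, d_1, …, d_K). -/
/-!
Since `d i ≤ N = (∑ i, d i) / 2`, `d` is the degree sequence of a loopless multigraph on `Fin K`
with `N` edges: join the two vertices of largest remaining degree and recurse. Index the
coordinates of `ℂ^N` by the edges and let `V i` be spanned by the coordinate vectors of the edges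
at `i`. For `i ≠ j`, `V i ⊓ V j` is then spanned by the edges joining `i` and `j`; as every edge
has exactly two distinct endpoints, these edge sets partition the edges at `i` as `j ≠ i` varies,
and partition all edges as `(i, j)` varies over the pairs with `i < j`.
-/

/-- `(V 0, …, V (K-1))` is a *feasible strategy* for `(K, d 0, …, d (K-1))`:
(i) `dim (V i) = d i` for all `i`;
(ii) for every `i`, the family `(V i ⊓ V j)_{j ≠ i}` is independent and
    `V i = ⨆_{j ≠ i} (V i ⊓ V j)`;
(iii) the family `(V i ⊓ V j)_{i < j}` is independent and its sup is the whole space. -/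
def FeasibleStrategy {E : Type*} [AddCommGroup E] [Module ℂ E]
    {K : ℕ} (d : Fin K → ℕ) (V : Fin K → Submodule ℂ E) : Prop :=
  (∀ i, Module.finrank ℂ (V i) = d i) ∧
  (∀ i, iSupIndep (fun j : {j : Fin K // j ≠ i} => V i ⊓ V j.1) ∧
    V i = ⨆ j : {j : Fin K // j ≠ i}, V i ⊓ V j.1) ∧
  iSupIndep (fun p : {p : Fin K × Fin K // p.1 < p.2} => V p.1.1 ⊓ V p.1.2) ∧
  (⨆ p : {p : Fin K × Fin K // p.1 < p.2}, V p.1.1 ⊓ V p.1.2) = ⊤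

open Finset Function

section Multigraph

variable {ι : Type*} [DecidableEq ι]

theorem card_filter_mem_cons {N : ℕ} (e : Sym2 ι) (f : Fin N → Sym2 ι) (i : ι) :
    #{k | i ∈ (Fin.cons e f : Fin (N + 1) → Sym2 ι) k} =
      #{k | i ∈ f k} + if i ∈ e then 1 else 0 := by
  simp only [card_filter, Fin.sum_univ_succ, Fin.cons_zero, Fin.cons_succ]
  ring

theorem Sym2.sum_ite_mem_mk_eq_two [Fintype ι] {a b : ι} (hab : a ≠ b) :
    ∑ i, (if i ∈ s(a, b) then 1 else 0) = 2 := by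
  simp [Sym2.mem_iff, filter_or, filter_eq', card_pair hab]

variable [Fintype ι]

theorem exists_ne_forall_le_of_sum_eq {N : ℕ} {d : ι → ℕ} (hle : ∀ i, d i ≤ N + 1)
    (hsum : ∑ i, d i = 2 * (N + 1)) :
    ∃ a b, a ≠ b ∧ 0 < d a ∧ 0 < d b ∧ ∀ i, i ≠ a → i ≠ b → d i ≤ N := by
  have hne : (univ : Finset ι).Nonempty := by
    by_contra h
    simp_all [not_nonempty_iff_eq_empty]
  obtain ⟨a, -, ha⟩ := exists_max_image univ d hne
  have hsum_a := add_sum_erase univ d (mem_univ a)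
  have hne' : (univ.erase a).Nonempty := by
    by_contra h
    rw [not_nonempty_iff_eq_empty.mp h, sum_empty] at hsum_a
    linarith [hle a]
  obtain ⟨b, hb, hb_max⟩ := exists_max_image _ d hne'
  have hba := (mem_erase.mp hb).1
  have hsum_b := add_sum_erase _ d hb
  have hb_pos : 0 < d b := by
    by_contra h
    have : ∑ j ∈ univ.erase a, d j = 0 := sum_eq_zero fun j hj => by linarith [hb_max j hj]
    linarith [hle a]
  refine ⟨a, b, hba.symm, hb_pos.trans_le (ha b (mem_univ b)), hb_pos, fun i hia hib => ?_⟩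
  have hi : i ∈ (univ.erase a).erase b :=
    mem_erase.mpr ⟨hib, mem_erase.mpr ⟨hia, mem_univ i⟩⟩
  have := single_le_sum (fun j _ => Nat.zero_le (d j)) hi
  have := hb_max i (mem_erase.mpr ⟨hia, mem_univ i⟩)
  have := ha b (mem_univ b)
  -- `d i ≤ d b ≤ d a`, so `3 * d i ≤ d i + d b + d a ≤ 2 * (N + 1)`
  omega

theorem exists_loopless_multigraph :
    ∀ {N : ℕ} {d : ι → ℕ}, (∀ i, d i ≤ N) → ∑ i, d i = 2 * N →
      ∃ f : Fin N → Sym2 ι, (∀ k, ¬(f k).IsDiag) ∧ ∀ i, #{k | i ∈ f k} = d i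
  | 0, d, hle, _ => ⟨Fin.elim0, Fin.rec0, fun i => by simp [Nat.le_zero.mp (hle i)]⟩
  | N + 1, d, hle, hsum => by
    obtain ⟨a, b, hab, ha, hb, hle'⟩ := exists_ne_forall_le_of_sum_eq hle hsum
    set d' : ι → ℕ := fun i => d i - if i ∈ s(a, b) then 1 else 0
    have hd : ∀ i, d i = d' i + if i ∈ s(a, b) then 1 else 0 := by
      intro i
      simp only [d']
      split_ifs with h
      · rcases Sym2.mem_iff.mp h with rfl | rfl <;> omega
      · rfl
    have hle_d' : ∀ i, d' i ≤ N := by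
      intro i
      by_cases h : i ∈ s(a, b)
      · have := hle i
        simp only [d', if_pos h]
        omega
      · simp only [Sym2.mem_iff, not_or] at h
        simpa [d', Sym2.mem_iff, h.1, h.2] using hle' i h.1 h.2
    have hsum_d' : ∑ i, d' i = 2 * N := by
      have := Sym2.sum_ite_mem_mk_eq_two hab
      rw [funext hd, sum_add_distrib] at hsum
      omega
    obtain ⟨f, hf, hdeg⟩ := exists_loopless_multigraph hle_d' hsum_d'
    refine ⟨Fin.cons s(a, b) f, Fin.cases (Sym2.mk_isDiag_iff.not.mpr hab) hf, fun i => ?_⟩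
    rw [card_filter_mem_cons, hdeg, ← hd]

end Multigraph

namespace Pi

variable {R η ι : Type*} [Semiring R] [Finite η]

theorem spanSubset_inf (s t : Set η) :
    spanSubset R s ⊓ spanSubset R t = spanSubset R (s ∩ t) := by
  ext v
  simp only [Submodule.mem_inf, mem_spanSubset_iff, Set.mem_inter_iff, not_and_or]
  exact ⟨fun ⟨hs, ht⟩ i hi => hi.elim (hs i) (ht i), fun h => ⟨fun i hi => h i (.inl hi),
    fun i hi => h i (.inr hi)⟩⟩

theorem iSup_spanSubset (s : ι → Set η) :
    ⨆ j, spanSubset R (s j) = spanSubset R (⋃ j, s j) := by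
  simp only [spanSubset, Set.image_iUnion, Submodule.span_iUnion]

theorem spanSubset_univ : spanSubset R (Set.univ : Set η) = ⊤ := by
  rw [spanSubset, Set.image_univ, Module.Basis.span_eq]

theorem iSupIndep_spanSubset {s : ι → Set η} (hs : Pairwise (Disjoint on s)) :
    iSupIndep fun j => spanSubset R (s j) := by
  intro j
  rw [iSup_subtype', iSup_spanSubset]
  exact (Pi.basisFun R η).linearIndependent.disjoint_span_image
    (Set.disjoint_iUnion_right.mpr fun k => hs (Ne.symm k.2))

end Pi

theorem Sym2.inf_lt_sup_of_not_isDiag {α : Type*} [LinearOrder α] {z : Sym2 α} (h : ¬z.IsDiag) :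
    z.inf < z.sup := by
  induction z using Sym2.ind
  exact inf_lt_sup.mpr fun hab => h (Sym2.mk_isDiag_iff.mpr hab)

section Incidence

variable {ι ε : Type*} (f : ε → Sym2 ι)

theorem setOf_mem_inter_setOf_mem {i j : ι} (h : i ≠ j) :
    {k | i ∈ f k} ∩ {k | j ∈ f k} = f ⁻¹' {s(i, j)} :=
  Set.ext fun _ => Sym2.mem_and_mem_iff h

variable {f}

theorem iUnion_preimage_mk_ne (hf : ∀ k, ¬(f k).IsDiag) (i : ι) :
    ⋃ j : {j // j ≠ i}, f ⁻¹' {s(i, j.1)} = {k | i ∈ f k} := by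
  ext k
  simp only [Set.mem_iUnion, Set.mem_preimage, Set.mem_singleton_iff, Set.mem_ofPred_eq]
  constructor
  · rintro ⟨j, hj⟩
    exact hj ▸ Sym2.mem_mk_left i j.1
  · intro h
    exact ⟨⟨_, Sym2.other_ne (hf k) h⟩, (Sym2.other_spec h).symm⟩

theorem iUnion_preimage_mk_lt [LinearOrder ι] (hf : ∀ k, ¬(f k).IsDiag) :
    ⋃ p : {p : ι × ι // p.1 < p.2}, f ⁻¹' {s(p.1.1, p.1.2)} = Set.univ :=
  Set.eq_univ_of_forall fun k => Set.mem_iUnion.mpr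
    ⟨⟨((f k).inf, (f k).sup), Sym2.inf_lt_sup_of_not_isDiag (hf k)⟩,
      (Sym2.sortEquiv.symm_apply_apply (f k)).symm⟩

theorem injective_mk_ne (i : ι) : Injective fun j : {j // j ≠ i} => s(i, j.1) :=
  fun _ _ h => Subtype.ext (Sym2.congr_right.mp h)

theorem injective_mk_lt [LinearOrder ι] :
    Injective fun p : {p : ι × ι // p.1 < p.2} => s(p.1.1, p.1.2) :=
  Sym2.sortEquiv.symm.injective.comp (Subtype.map_injective (fun _ => le_of_lt) injective_id)

end Incidence

theorem feasibleStrategy_spanSubset {K : ℕ} {ε : Type*} [Fintype ε] {f : ε → Sym2 (Fin K)}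
    (hf : ∀ k, ¬(f k).IsDiag) :
    FeasibleStrategy (fun i => #{k | i ∈ f k}) fun i => Pi.spanSubset ℂ {k | i ∈ f k} := by
  have hinf : ∀ i j, i ≠ j →
      Pi.spanSubset ℂ {k | i ∈ f k} ⊓ Pi.spanSubset ℂ {k | j ∈ f k}
        = Pi.spanSubset ℂ (f ⁻¹' {s(i, j)}) := fun i j h => by
    rw [Pi.spanSubset_inf, setOf_mem_inter_setOf_mem f h]
  refine ⟨fun i => ?_, fun i => ?_, ?_⟩
  · rw [Pi.dim_spanSubset, Set.ncard_eq_toFinset_card', Set.toFinset_ofPred]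
  · simp only [funext fun j : {j // j ≠ i} => hinf i j (Ne.symm j.2)]
    rw [Pi.iSup_spanSubset, iUnion_preimage_mk_ne hf]
    exact ⟨Pi.iSupIndep_spanSubset ((pairwise_disjoint_fiber f).comp_of_injective
      (injective_mk_ne i)), rfl⟩
  · simp only [funext fun p : {p : Fin K × Fin K // p.1 < p.2} => hinf _ _ p.2.ne]
    rw [Pi.iSup_spanSubset, iUnion_preimage_mk_lt hf, Pi.spanSubset_univ]
    exact ⟨Pi.iSupIndep_spanSubset ((pairwise_disjoint_fiber f).comp_of_injective
      injective_mk_lt), rfl⟩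

theorem stmt1 (K N : ℕ) (d : Fin K → ℕ) (hle : ∀ i, d i ≤ N)
    (hsum : ∑ i, d i = 2 * N) :
    ∃ V : Fin K → Submodule ℂ (Fin N → ℂ), FeasibleStrategy d V := by
  obtain ⟨f, hf, hdeg⟩ := exists_loopless_multigraph hle hsum
  obtain rfl : d = fun i => #{k | i ∈ f k} := funext fun i => (hdeg i).symm
  exact ⟨_, feasibleStrategy_spanSubset hf⟩
end

section
/- Let V be a complex vector space of dimension N, let d be a natural number with 3·d = 2·N, and let V_1, V_2, V_3 be subspaces of V, each of dimension d. Then (V_1, V_2, V_3) is a feasible strategy for (3, N, d, d, d) if and only if dim(V_i ∩ V_j) = 2d − N for every pair i < j and V_1 ∩ V_2 ∩ V_3 = 0. -/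
open Function Module Submodule

/-! Write `Vᵢⱼ = Vᵢ ⊓ Vⱼ`. Condition (ii) makes each `Vᵢ` the direct sum of its two intersections
`Vᵢⱼ`, `Vᵢₖ`, so `dim Vᵢⱼ + dim Vᵢₖ = d` for all three `i`; hence every `dim Vᵢⱼ = d / 2 = 2d - N`,
and `V₁ ⊓ V₂ ⊓ V₃ = V₁₂ ⊓ V₁₃ = 0`. Conversely, a trivial triple intersection makes each `Vᵢⱼ`
disjoint from the sum of the other two, since that sum lies in `Vₖ`. The dimension counts
`2 (2d - N) = d` and `d + (2d - N) = N` then turn these disjoint sums into the equalities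
`Vᵢ = Vᵢⱼ ⊔ Vᵢₖ` and `V₁₂ ⊔ V₁₃ ⊔ V₂₃ = V₁ ⊔ V₂₃ = ⊤`. -/

section Lattice

variable {α : Type*} [CompleteLattice α]

theorem iSup_eq_sup_of_forall_eq_or_eq {ι : Type*} {f : ι → α} {i j : ι}
    (huniv : ∀ k, k = i ∨ k = j) : ⨆ k, f k = f i ⊔ f j :=
  le_antisymm (iSup_le fun k => by rcases huniv k with rfl | rfl <;> simp)
    (sup_le (le_iSup f i) (le_iSup f j))

theorem iSupIndep_comp_iff_of_bijective {ι ι' : Type*} {t : ι → α} {e : ι' → ι}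
    (he : Bijective e) : iSupIndep (t ∘ e) ↔ iSupIndep t :=
  ⟨fun h => h.comp' he.2, fun h => h.comp he.1⟩

theorem disjoint_inf_inf_iff {a b c : α} : Disjoint (a ⊓ b) (a ⊓ c) ↔ a ⊓ b ⊓ c = ⊥ := by
  rw [disjoint_iff, ← inf_inf_distrib_left, inf_assoc]

theorem iSupIndep_inf_pairs_of_inf_eq_bot {a b c : α} (h : a ⊓ b ⊓ c = ⊥) :
    iSupIndep ![a ⊓ b, a ⊓ c, b ⊓ c] := by
  rw [iSupIndep_fin_three]
  simp only [Matrix.cons_val_zero, Matrix.cons_val_one, Matrix.cons_val]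
  refine ⟨?_, ?_, ?_⟩
  · exact (disjoint_iff.2 h).mono_right (sup_le inf_le_right inf_le_right)
  · exact (disjoint_iff.2 (by rwa [inf_right_comm])).mono_right (sup_le inf_le_left inf_le_right)
  · exact (disjoint_iff.2 (by rwa [inf_comm, ← inf_assoc])).mono_right
      (sup_le inf_le_left inf_le_left)

end Lattice

section FinRank

variable {K V : Type*} [DivisionRing K] [AddCommGroup V] [Module K V]

theorem Submodule.finrank_sup_of_disjoint {s t : Submodule K V} [FiniteDimensional K s]
    [FiniteDimensional K t] (h : Disjoint s t) :
    finrank K ↥(s ⊔ t) = finrank K s + finrank K t := by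
  rw [← finrank_sup_add_finrank_inf_eq, h.eq_bot, finrank_bot, add_zero]

theorem Submodule.eq_sup_iff_finrank_eq_add {s t W : Submodule K V} [FiniteDimensional K W]
    (hs : s ≤ W) (ht : t ≤ W) (h : Disjoint s t) :
    W = s ⊔ t ↔ finrank K W = finrank K s + finrank K t := by
  have : FiniteDimensional K s := finiteDimensional_of_le hs
  have : FiniteDimensional K t := finiteDimensional_of_le ht
  rw [← finrank_sup_of_disjoint h]
  exact ⟨fun hW => hW ▸ rfl, fun hdim => (eq_of_le_of_finrank_eq (sup_le hs ht) hdim.symm).symm⟩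

end FinRank

theorem feasibleStrategy_three_iff {E : Type*} [AddCommGroup E] [Module ℂ E] (d : Fin 3 → ℕ)
    (V₁ V₂ V₃ : Submodule ℂ E) :
    FeasibleStrategy d ![V₁, V₂, V₃] ↔
      (finrank ℂ V₁ = d 0 ∧ finrank ℂ V₂ = d 1 ∧ finrank ℂ V₃ = d 2) ∧
      (Disjoint (V₁ ⊓ V₂) (V₁ ⊓ V₃) ∧ V₁ = V₁ ⊓ V₂ ⊔ V₁ ⊓ V₃) ∧
      (Disjoint (V₂ ⊓ V₁) (V₂ ⊓ V₃) ∧ V₂ = V₂ ⊓ V₁ ⊔ V₂ ⊓ V₃) ∧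
      (Disjoint (V₃ ⊓ V₁) (V₃ ⊓ V₂) ∧ V₃ = V₃ ⊓ V₁ ⊔ V₃ ⊓ V₂) ∧
      iSupIndep ![V₁ ⊓ V₂, V₁ ⊓ V₃, V₂ ⊓ V₃] ∧ V₁ ⊓ V₂ ⊔ V₁ ⊓ V₃ ⊔ V₂ ⊓ V₃ = ⊤ := by
  have huniv₁ : ∀ k : {j : Fin 3 // j ≠ 0}, k = ⟨1, by decide⟩ ∨ k = ⟨2, by decide⟩ := by decide
  have huniv₂ : ∀ k : {j : Fin 3 // j ≠ 1}, k = ⟨0, by decide⟩ ∨ k = ⟨2, by decide⟩ := by decide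
  have huniv₃ : ∀ k : {j : Fin 3 // j ≠ 2}, k = ⟨0, by decide⟩ ∨ k = ⟨1, by decide⟩ := by decide
  have hpairs : Bijective (![⟨(0, 1), by decide⟩, ⟨(0, 2), by decide⟩, ⟨(1, 2), by decide⟩] :
      Fin 3 → {p : Fin 3 × Fin 3 // p.1 < p.2}) := by decide
  simp only [FeasibleStrategy, Fin.forall_fin_succ, IsEmpty.forall_iff, and_true,
    Fin.succ_zero_eq_one, Fin.succ_one_eq_two]
  rw [iSupIndep_pair (by decide) huniv₁, iSupIndep_pair (by decide) huniv₂,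
    iSupIndep_pair (by decide) huniv₃,
    iSup_eq_sup_of_forall_eq_or_eq huniv₁, iSup_eq_sup_of_forall_eq_or_eq huniv₂,
    iSup_eq_sup_of_forall_eq_or_eq huniv₃, ← iSupIndep_comp_iff_of_bijective hpairs,
    ← hpairs.surjective.iSup_comp, iSup_fin_three]
  simp only [Matrix.cons_val_zero, Matrix.cons_val_one, Matrix.cons_val, and_assoc]
  -- `FinVec.map f ![a, b, c]` unfolds definitionally to `![f a, f b, f c]`
  rw [← FinVec.map_eq]
  exact Iff.rfl

theorem stmt9 {E : Type*} [AddCommGroup E] [Module ℂ E] [FiniteDimensional ℂ E]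
    (N d : ℕ) (hdim : Module.finrank ℂ E = N) (hd : 3 * d = 2 * N)
    (V₁ V₂ V₃ : Submodule ℂ E)
    (h₁ : Module.finrank ℂ V₁ = d) (h₂ : Module.finrank ℂ V₂ = d)
    (h₃ : Module.finrank ℂ V₃ = d) :
    FeasibleStrategy (fun _ => d) ![V₁, V₂, V₃] ↔
      (Module.finrank ℂ ↥(V₁ ⊓ V₂) = 2 * d - N ∧
       Module.finrank ℂ ↥(V₁ ⊓ V₃) = 2 * d - N ∧
       Module.finrank ℂ ↥(V₂ ⊓ V₃) = 2 * d - N) ∧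
      V₁ ⊓ V₂ ⊓ V₃ = ⊥ := by
  rw [feasibleStrategy_three_iff, inf_comm V₂ V₁, inf_comm V₃ V₁, inf_comm V₃ V₂]
  simp only [h₁, h₂, h₃, true_and]
  constructor
  · rintro ⟨⟨hdisj₁, hV₁⟩, ⟨hdisj₂, hV₂⟩, ⟨hdisj₃, hV₃⟩, -⟩
    rw [eq_sup_iff_finrank_eq_add inf_le_left inf_le_left hdisj₁, h₁] at hV₁
    rw [eq_sup_iff_finrank_eq_add inf_le_right inf_le_left hdisj₂, h₂] at hV₂
    rw [eq_sup_iff_finrank_eq_add inf_le_right inf_le_right hdisj₃, h₃] at hV₃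
    exact ⟨by omega, disjoint_inf_inf_iff.1 hdisj₁⟩
  · rintro ⟨⟨h₁₂, h₁₃, h₂₃⟩, htriple⟩
    have hdisj₁ : Disjoint (V₁ ⊓ V₂) (V₁ ⊓ V₃) := disjoint_inf_inf_iff.2 htriple
    have hdisj₂ : Disjoint (V₁ ⊓ V₂) (V₂ ⊓ V₃) := by
      rw [disjoint_iff, ← htriple]; ac_rfl
    have hdisj₃ : Disjoint (V₁ ⊓ V₃) (V₂ ⊓ V₃) := by
      rw [disjoint_iff, ← htriple]; ac_rfl
    have hV₁ : V₁ = V₁ ⊓ V₂ ⊔ V₁ ⊓ V₃ :=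
      (eq_sup_iff_finrank_eq_add inf_le_left inf_le_left hdisj₁).2 (by omega)
    refine ⟨⟨hdisj₁, hV₁⟩,
      ⟨hdisj₂, (eq_sup_iff_finrank_eq_add inf_le_right inf_le_left hdisj₂).2 (by omega)⟩,
      ⟨hdisj₃, (eq_sup_iff_finrank_eq_add inf_le_right inf_le_right hdisj₃).2 (by omega)⟩,
      iSupIndep_inf_pairs_of_inf_eq_bot htriple, ?_⟩
    rw [← hV₁]
    exact eq_top_of_disjoint _ _ (by omega) (disjoint_iff.2 (by rw [← inf_assoc, htriple]))
end

section
/- Let V be a complex vector space of dimension N and let (W_{ij})_{1 ≤ i < j ≤ K} be a family of subspaces of V that is independent (its sum is direct) and satisfies Σ_{1 ≤ i < j ≤ K} W_{ij} = V. Define V_i = Σ_{j ≠ i} W_{ij} (where W_{ij} = W_{ji} for j < i). Then V_i ∩ V_j = W_{ij} for all i ≠ j, and (V_1, …, V_K) is a feasible strategy for (K, N, d_1, …, d_K) with d_i = Σ_{j ≠ i} dim W_{ij}. -/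
open Function Set Module

theorem iSupIndep.biSup_inf_biSup {α ι : Type*} [CompleteLattice α] [IsModularLattice α]
    [IsCompactlyGenerated α] {f : ι → α} (hf : iSupIndep f) (s t : Set ι) :
    (⨆ i ∈ s, f i) ⊓ (⨆ i ∈ t, f i) = ⨆ i ∈ s ∩ t, f i := by
  have hdisj : Disjoint (⨆ i ∈ s \ t, f i) (⨆ i ∈ t, f i) :=
    hf.disjoint_biSup_biSup disjoint_sdiff_left
  calc (⨆ i ∈ s, f i) ⊓ (⨆ i ∈ t, f i)
      = ((⨆ i ∈ s ∩ t, f i) ⊔ ⨆ i ∈ s \ t, f i) ⊓ ⨆ i ∈ t, f i := by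
        rw [← iSup_union, inter_union_sdiff]
    _ = (⨆ i ∈ s ∩ t, f i) ⊔ ((⨆ i ∈ s \ t, f i) ⊓ ⨆ i ∈ t, f i) :=
        sup_inf_assoc_of_le _ (biSup_mono fun _ => And.right)
    _ = ⨆ i ∈ s ∩ t, f i := by rw [hdisj.eq_bot, sup_bot_eq]

theorem Submodule.finrank_iSup_eq_sum {K V ι : Type*} [DivisionRing K] [AddCommGroup V]
    [Module K V] [FiniteDimensional K V] [Fintype ι] {f : ι → Submodule K V}
    (hf : iSupIndep f) : finrank K ↥(⨆ i, f i) = ∑ i, finrank K (f i) := by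
  classical
  suffices h : ∀ s : Finset ι, finrank K ↥(⨆ i ∈ s, f i) = ∑ i ∈ s, finrank K (f i) by
    rw [← h, show (⨆ i ∈ Finset.univ, f i) = ⨆ i, f i by simp]
  intro s
  induction s using Finset.induction_on with
  | empty => simp
  | insert a s ha ih =>
    have hdisj : Disjoint (f a) (⨆ i ∈ s, f i) := hf.disjoint_biSup (by simpa using ha)
    have := finrank_sup_add_finrank_inf_eq (f a) (⨆ i ∈ s, f i)
    rw [hdisj.eq_bot, finrank_bot, add_zero] at this
    rw [Finset.iSup_insert, Finset.sum_insert ha, this, ih]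

section StarEdge

variable {ι : Type*} [LinearOrder ι]

def starEdge (i : ι) (k : {k : ι // k ≠ i}) : {p : ι × ι // p.1 < p.2} :=
  ⟨(min i k, max i k), min_lt_max.2 k.2.symm⟩

theorem apply_starEdge {α : Type*} {g : ι → ι → α} (hg : ∀ i j, g i j = g j i) (i : ι)
    (k : {k : ι // k ≠ i}) : g (starEdge i k).1.1 (starEdge i k).1.2 = g i k := by
  rcases le_total i k with h | h
  · simp [starEdge, h]
  · simp [starEdge, h, hg k.1]

theorem starEdge_injective (i : ι) : Injective (starEdge i) := by
  rintro ⟨a, ha⟩ ⟨b, hb⟩ h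
  simp only [starEdge, Subtype.mk.injEq, Prod.mk.injEq] at h
  grind

theorem mem_range_starEdge {i : ι} {p : {p : ι × ι // p.1 < p.2}} :
    p ∈ range (starEdge i) ↔ p.1.1 = i ∨ p.1.2 = i := by
  constructor
  · rintro ⟨k, rfl⟩
    rcases le_total i k with h | h <;> simp [starEdge, h]
  · rintro (h | h)
    · refine ⟨⟨p.1.2, h ▸ p.2.ne'⟩, Subtype.ext ?_⟩
      simp [starEdge, ← h, p.2.le]
    · refine ⟨⟨p.1.1, h ▸ p.2.ne⟩, Subtype.ext ?_⟩
      simp [starEdge, ← h, p.2.le]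

theorem range_starEdge_inter {i j : ι} (hij : i ≠ j) :
    range (starEdge i) ∩ range (starEdge j) = {starEdge i ⟨j, hij.symm⟩} := by
  ext ⟨⟨a, b⟩, hab⟩
  simp only [mem_inter_iff, mem_range_starEdge, mem_singleton_iff, starEdge, Subtype.mk.injEq,
    Prod.mk.injEq]
  grind

end StarEdge

theorem stmt10_general {E : Type*} [AddCommGroup E] [Module ℂ E] [FiniteDimensional ℂ E]
    (K : ℕ)
    (W : Fin K → Fin K → Submodule ℂ E) (hsymm : ∀ i j, W i j = W j i)
    (hindep : iSupIndep (fun p : {p : Fin K × Fin K // p.1 < p.2} => W p.1.1 p.1.2))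
    (hsup : (⨆ p : {p : Fin K × Fin K // p.1 < p.2}, W p.1.1 p.1.2) = ⊤) :
    (∀ i j : Fin K, i ≠ j →
      (⨆ k : {k : Fin K // k ≠ i}, W i k.1) ⊓ (⨆ k : {k : Fin K // k ≠ j}, W j k.1) = W i j) ∧
    FeasibleStrategy
      (fun i => ∑ j ∈ Finset.univ.filter (· ≠ i), Module.finrank ℂ (W i j))
      (fun i => ⨆ k : {k : Fin K // k ≠ i}, W i k.1) := by
  have hstar : ∀ i, (⨆ k : {k // k ≠ i}, W i k.1) =
      ⨆ p ∈ range (starEdge i), W p.1.1 p.1.2 := fun i => by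
    simp only [iSup_range, apply_starEdge hsymm]
  have hstar_indep : ∀ i, iSupIndep fun k : {k // k ≠ i} => W i k.1 := fun i => by
    simpa only [comp_def, apply_starEdge hsymm] using hindep.comp (starEdge_injective i)
  have hinf : ∀ i j, i ≠ j →
      (⨆ k : {k // k ≠ i}, W i k.1) ⊓ (⨆ k : {k // k ≠ j}, W j k.1) = W i j := by
    intro i j hij
    rw [hstar, hstar, hindep.biSup_inf_biSup, range_starEdge_inter hij, iSup_singleton,
      apply_starEdge hsymm]
  have hinf_star : ∀ i, (fun j : {j // j ≠ i} =>
      (⨆ k : {k // k ≠ i}, W i k.1) ⊓ (⨆ k : {k // k ≠ j.1}, W j.1 k.1)) = fun j => W i j.1 :=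
    fun i => funext fun j => hinf i j j.2.symm
  have hinf_edge : (fun p : {p : Fin K × Fin K // p.1 < p.2} =>
      (⨆ k : {k // k ≠ p.1.1}, W p.1.1 k.1) ⊓ (⨆ k : {k // k ≠ p.1.2}, W p.1.2 k.1)) =
      fun p => W p.1.1 p.1.2 :=
    funext fun p => hinf _ _ p.2.ne
  refine ⟨hinf, fun i => ?_, fun i => ?_, ?_, ?_⟩
  · beta_reduce
    rw [Submodule.finrank_iSup_eq_sum (hstar_indep i)]
    exact (Finset.sum_subtype _ (fun _ => Finset.mem_filter_univ _)
      (fun j => finrank ℂ (W i j))).symm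
  · rw [hinf_star]
    exact ⟨hstar_indep i, rfl⟩
  · rw [hinf_edge]; exact hindep
  · rw [hinf_edge]; exact hsup

theorem stmt10 {E : Type*} [AddCommGroup E] [Module ℂ E] [FiniteDimensional ℂ E]
    (K N : ℕ) (hdim : Module.finrank ℂ E = N)
    (W : Fin K → Fin K → Submodule ℂ E) (hsymm : ∀ i j, W i j = W j i)
    (hindep : iSupIndep (fun p : {p : Fin K × Fin K // p.1 < p.2} => W p.1.1 p.1.2))
    (hsup : (⨆ p : {p : Fin K × Fin K // p.1 < p.2}, W p.1.1 p.1.2) = ⊤) :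
    (∀ i j : Fin K, i ≠ j →
      (⨆ k : {k : Fin K // k ≠ i}, W i k.1) ⊓ (⨆ k : {k : Fin K // k ≠ j}, W j k.1) = W i j) ∧
    FeasibleStrategy
      (fun i => ∑ j ∈ Finset.univ.filter (· ≠ i), Module.finrank ℂ (W i j))
      (fun i => ⨆ k : {k : Fin K // k ≠ i}, W i k.1) :=
  stmt10_general K W hsymm hindep hsup
end

section
/- Let V_1, V_2, V_3, V_4 be one-dimensional subspaces (lines) of the complex vector space ℂ². Then (V_1, V_2, V_3, V_4) is a feasible strategy for (4, 2, 1, 1, 1, 1) if and only if there exists a fixed-point-free involution σ of the index set {1, 2, 3, 4} such that for all indices i, j: V_i = V_j holds exactly when j ∈ {i, σ(i)}. -/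
open Module Submodule Function

section CompleteLattice

variable {α ι : Type*} [CompleteLattice α]

theorem iSupIndep_and_iSup_eq_iff_existsUnique {t : ι → α} {a : α} (ha : a ≠ ⊥)
    (ht : ∀ j, t j = ⊥ ∨ t j = a) : (iSupIndep t ∧ ⨆ j, t j = a) ↔ ∃! j, t j = a := by
  constructor
  · rintro ⟨hind, hsup⟩
    obtain ⟨j, hj⟩ : ∃ j, t j = a := by
      by_contra! h
      exact ha (hsup ▸ iSup_eq_bot.mpr fun j => (ht j).resolve_right (h j))
    refine ⟨j, hj, fun k hk => by_contra fun hkj => ha ?_⟩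
    have hdisj : Disjoint (t k) (t j) := hind.pairwiseDisjoint hkj
    rwa [hj, hk, disjoint_self] at hdisj
  · rintro ⟨j, hj, huniq⟩
    have hbot : ∀ k, t k ≠ ⊥ → k = j := fun k hk => huniq k ((ht k).resolve_left hk)
    have : Subsingleton {k // t k ≠ ⊥} :=
      ⟨fun k l => Subtype.ext ((hbot k k.2).trans (hbot l l.2).symm)⟩
    refine ⟨iSupIndep_ne_bot.mp (iSupIndep_subsingleton _), le_antisymm ?_ (hj ▸ le_iSup t j)⟩
    exact iSup_le fun k => (ht k).elim (fun h => h ▸ bot_le) le_of_eq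

section Pair

variable {t : ι → α} {a b : ι}

theorem biSup_ne_le_of_eq_bot_of_ne (h : ∀ k, k ≠ a → k ≠ b → t k = ⊥) : ⨆ (k) (_ : k ≠ a), t k ≤ t b := by
  refine iSup₂_le fun k hka => ?_
  by_cases hkb : k = b
  · rw [hkb]
  · rw [h k hka hkb]
    exact bot_le

theorem iSupIndep_of_eq_bot_of_ne (h : ∀ k, k ≠ a → k ≠ b → t k = ⊥) (hab : Disjoint (t a) (t b)) : iSupIndep t := by
  intro k
  by_cases hka : k = a
  · subst hka
    exact hab.mono_right (biSup_ne_le_of_eq_bot_of_ne h)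
  by_cases hkb : k = b
  · subst hkb
    exact hab.symm.mono_right (biSup_ne_le_of_eq_bot_of_ne fun k h₁ h₂ => h k h₂ h₁)
  · rw [h k hka hkb]
    exact disjoint_bot_left

theorem iSup_eq_sup_of_eq_bot_of_ne (h : ∀ k, k ≠ a → k ≠ b → t k = ⊥) : ⨆ k, t k = t a ⊔ t b := by
  refine le_antisymm (iSup_le fun k => ?_) (sup_le (le_iSup t a) (le_iSup t b))
  by_cases hka : k = a
  · exact hka ▸ le_sup_left
  by_cases hkb : k = b
  · exact hkb ▸ le_sup_right
  · exact h k hka hkb ▸ bot_le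

end Pair

theorem iSupIndep_inf_and_eq_iSup_inf_iff {V : ι → α} (hV : ∀ i, IsAtom (V i)) (i : ι) :
    (iSupIndep (fun j : {j // j ≠ i} => V i ⊓ V j) ∧ V i = ⨆ j : {j // j ≠ i}, V i ⊓ V j) ↔
      ∃! j : {j // j ≠ i}, V i = V j := by
  have hinf : ∀ j, V i ⊓ V j = V i ↔ V i = V j := fun j =>
    inf_eq_left.trans ((hV j).le_iff_eq (hV i).ne_bot)
  rw [eq_comm (a := V i), iSupIndep_and_iSup_eq_iff_existsUnique (hV i).ne_bot
    fun j => (hV i).le_iff.mp inf_le_left]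
  simp only [hinf]

end CompleteLattice

theorem exists_involution_iff_existsUnique_ne {ι β : Type*} {V : ι → β} :
    (∃ σ : ι → ι, (∀ i, σ (σ i) = i) ∧ (∀ i, σ i ≠ i) ∧ ∀ i j, V i = V j ↔ (j = i ∨ j = σ i)) ↔
      ∀ i, ∃! j : {j // j ≠ i}, V i = V j := by
  constructor
  · rintro ⟨σ, -, hfix, hiff⟩ i
    refine ⟨⟨σ i, hfix i⟩, (hiff i _).mpr (Or.inr rfl), fun j hj => Subtype.ext ?_⟩
    exact ((hiff i j).mp hj).resolve_left j.2
  · intro h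
    choose σ hσ huniq using h
    have hσ_eq : ∀ i j, j ≠ i → V i = V j → j = σ i := fun i j hj hV =>
      congrArg Subtype.val (huniq i ⟨j, hj⟩ hV)
    refine ⟨fun i => σ i, fun i => ?_, fun i => (σ i).2, fun i j => ?_⟩
    · exact (hσ_eq (σ i) i (σ i).2.symm (hσ i).symm).symm
    · refine ⟨fun hV => or_iff_not_imp_left.mpr fun hj => hσ_eq i j hj hV, ?_⟩
      rintro (rfl | rfl)
      exacts [rfl, hσ i]

set_option maxRecDepth 10000 in
theorem exists_orbit_reps_of_involutive_fin_four {σ : Fin 4 → Fin 4} (hσ : Involutive σ)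
    (hfix : ∀ i, σ i ≠ i) :
    ∃ a c : Fin 4, a < σ a ∧ c < σ c ∧ c ≠ a ∧ c ≠ σ a ∧ ∀ i, i < σ i → i = a ∨ i = c := by
  revert σ
  unfold Involutive
  decide

theorem exists_iSupIndep_inf_pairs {α : Type*} [CompleteLattice α] {V : Fin 4 → α}
    (hV : ∀ i, IsAtom (V i)) {σ : Fin 4 → Fin 4} (hσ : Involutive σ) (hfix : ∀ i, σ i ≠ i)
    (hiff : ∀ i j, V i = V j ↔ (j = i ∨ j = σ i)) :
    ∃ a c, V a ≠ V c ∧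
      iSupIndep (fun p : {p : Fin 4 × Fin 4 // p.1 < p.2} => V p.1.1 ⊓ V p.1.2) ∧
      ⨆ p : {p : Fin 4 × Fin 4 // p.1 < p.2}, V p.1.1 ⊓ V p.1.2 = V a ⊔ V c := by
  obtain ⟨a, c, ha, hc, hca, hcσa, hreps⟩ := exists_orbit_reps_of_involutive_fin_four hσ hfix
  have hinf_σ : ∀ i, V i ⊓ V (σ i) = V i := fun i =>
    inf_eq_left.mpr ((hiff i (σ i)).mpr (Or.inr rfl)).le
  have hbot : ∀ p : {p : Fin 4 × Fin 4 // p.1 < p.2}, p ≠ ⟨(a, σ a), ha⟩ →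
      p ≠ ⟨(c, σ c), hc⟩ → V p.1.1 ⊓ V p.1.2 = ⊥ := by
    rintro ⟨⟨i, j⟩, hij⟩ hpa hpc
    refine ((hV i).disjoint_of_ne (hV j) fun hVij => ?_).eq_bot
    rcases (hiff i j).mp hVij with rfl | rfl
    · exact lt_irrefl _ hij
    · rcases hreps i hij with rfl | rfl <;> simp_all
  have hac : V a ≠ V c := fun h => ((hiff a c).mp h).elim hca hcσa
  refine ⟨a, c, hac, iSupIndep_of_eq_bot_of_ne hbot ?_, ?_⟩
  · simpa [hinf_σ] using (hV a).disjoint_of_ne (hV c) hac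
  · simp [iSup_eq_sup_of_eq_bot_of_ne hbot, hinf_σ]

theorem Submodule.sup_eq_top_of_finrank_eq_two {K E : Type*} [DivisionRing K] [AddCommGroup E]
    [Module K E] (hE : finrank K E = 2) {L M : Submodule K E} (hL : IsAtom L) (hM : IsAtom M)
    (hLM : L ≠ M) : L ⊔ M = ⊤ := by
  have : FiniteDimensional K E := Module.finite_of_finrank_eq_succ hE
  have hsum := finrank_sup_add_finrank_inf_eq L M
  rw [(hL.disjoint_of_ne hM hLM).eq_bot, finrank_bot, isAtom_iff_finrank_eq_one.mp hL,
    isAtom_iff_finrank_eq_one.mp hM] at hsum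
  exact eq_top_of_finrank_eq (by omega)

theorem stmt12 (V : Fin 4 → Submodule ℂ (Fin 2 → ℂ))
    (hline : ∀ i, Module.finrank ℂ (V i) = 1) :
    FeasibleStrategy (fun _ => 1) V ↔
      ∃ σ : Fin 4 → Fin 4, (∀ i, σ (σ i) = i) ∧ (∀ i, σ i ≠ i) ∧
        ∀ i j, V i = V j ↔ (j = i ∨ j = σ i) := by
  have hV : ∀ i, IsAtom (V i) := fun i => isAtom_iff_finrank_eq_one.mpr (hline i)
  constructor
  · rintro ⟨-, hpairs, -⟩
    exact exists_involution_iff_existsUnique_ne.mpr fun i =>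
      (iSupIndep_inf_and_eq_iSup_inf_iff hV i).mp (hpairs i)
  · rintro ⟨σ, hinv, hfix, hiff⟩
    obtain ⟨a, c, hac, hind, hsup⟩ := exists_iSupIndep_inf_pairs hV hinv hfix hiff
    refine ⟨hline, fun i => (iSupIndep_inf_and_eq_iSup_inf_iff hV i).mpr ?_, hind, ?_⟩
    · exact exists_involution_iff_existsUnique_ne.mp ⟨σ, hinv, hfix, hiff⟩ i
    · rw [hsup]
      exact sup_eq_top_of_finrank_eq_two (by simp) (hV a) (hV c) hac
end

section
/- Let u_1, u_2, u_3 be nonzero vectors in the Hermitian inner product space ℂ³, and for each i let V_i = (ℂ·u_i)^⊥ be the orthogonal complement of the line spanned by u_i (so each V_i is a plane). Then (V_1, V_2, V_3) is a feasible strategy for (3, 3, 2, 2, 2) if and only if the determinant of the 3×3 matrix whose columns are u_1, u_2, u_3 is nonzero. -/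
/-!
If the `u i` are linearly dependent, some nonzero vector is orthogonal to all of them; it lies in
`V 0 ⊓ V 1` and in `V 0 ⊓ V 2`, so the pairwise intersections are not independent. If the `u i` form a
basis, let `w` be the dual basis, `⟪u i, w j⟫ = δᵢⱼ`. Then `V i` is spanned by the `w j` with
`j ≠ i`, so every subspace occurring in the definition is spanned by a subset of `w`, and all the
conditions reduce to disjointness and covering of the index sets `{i}ᶜ ∩ {j}ᶜ = {k}`.
-/

open Function Submodule Module
open scoped InnerProductSpace

section SpanImage

variable {R M ι : Type*} [Ring R] [AddCommGroup M] [Module R M]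

theorem Module.Basis.span_image_inf_span_image (b : Basis ι R M) (s t : Set ι) :
    span R (b '' s) ⊓ span R (b '' t) = span R (b '' (s ∩ t)) := by
  ext x
  simp only [mem_inf, b.mem_span_image, Set.subset_inter_iff]

theorem Module.Basis.finrank_span_image [Nontrivial R] [StrongRankCondition R] (b : Basis ι R M)
    (s : Finset ι) : finrank R (span R (b '' s)) = s.card := by
  rw [Set.image_eq_range]
  exact (finrank_span_eq_card (b.linearIndependent.comp _ Subtype.val_injective)).trans
    (Fintype.card_coe s)

theorem LinearIndependent.iSupIndep_span_image {κ : Type*} {v : ι → M}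
    (hv : LinearIndependent R v) {s : κ → Set ι} (hs : Pairwise (Disjoint on s)) :
    iSupIndep fun k => span R (v '' s k) := by
  refine iSupIndep_def.2 fun k => ?_
  simp only [iSup_span, ← Set.image_iUnion]
  exact hv.disjoint_span_image (Set.disjoint_iUnion₂_right.2 fun j hj => hs hj.symm)

end SpanImage

section InnerDual

variable {𝕜 E ι : Type*} [RCLike 𝕜] [NormedAddCommGroup E] [InnerProductSpace 𝕜 E]
  [FiniteDimensional 𝕜 E] [Fintype ι]

/-- The basis `w` dual to `b` for the inner product: `⟪b i, w j⟫ = δᵢⱼ`. -/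
noncomputable def Module.Basis.innerDual (b : Basis ι 𝕜 E) : Basis ι 𝕜 E :=
  .ofEquivFun <| LinearMap.linearEquivOfInjective (LinearMap.pi fun i => innerₛₗ 𝕜 (b i))
    (fun _ _ h => InnerProductSpace.ext_inner_left_basis b fun i => congrFun h i)
    (by simp [finrank_eq_card_basis b])

theorem Module.Basis.innerDual_repr (b : Basis ι 𝕜 E) (x : E) (i : ι) :
    b.innerDual.repr x i = ⟪b i, x⟫_𝕜 :=
  rfl

theorem Module.Basis.orthogonal_span_singleton (b : Basis ι 𝕜 E) (i : ι) :
    (𝕜 ∙ b i)ᗮ = span 𝕜 (b.innerDual '' {i}ᶜ) := by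
  ext x
  rw [mem_orthogonal_singleton_iff_inner_right, mem_span_image, Set.subset_compl_singleton_iff,
    Finset.mem_coe, Finsupp.notMem_support_iff, innerDual_repr]

theorem linearIndependent_iff_iInf_orthogonal_eq_bot {u : ι → E}
    (hcard : Fintype.card ι = finrank 𝕜 E) :
    LinearIndependent 𝕜 u ↔ ⨅ i, (𝕜 ∙ u i)ᗮ = ⊥ := by
  rw [iInf_orthogonal, ← span_range_eq_iSup, orthogonal_eq_bot_iff]
  exact ⟨fun hu => hu.span_eq_top_of_card_eq_finrank' hcard,
    fun hspan => linearIndependent_of_top_le_span_of_card_eq_finrank hspan.ge hcard⟩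

end InnerDual

theorem EuclideanSpace.det_ne_zero_iff_linearIndependent {𝕜 n : Type*} [Field 𝕜] [Fintype n]
    [DecidableEq n] (u : n → EuclideanSpace 𝕜 n) :
    (Matrix.of fun i j => u j i).det ≠ 0 ↔ LinearIndependent 𝕜 u := by
  rw [← isUnit_iff_ne_zero, ← Matrix.isUnit_iff_isUnit_det,
    ← Matrix.linearIndependent_cols_iff_isUnit]
  exact LinearMap.linearIndependent_iff (WithLp.linearEquiv 2 𝕜 (n → 𝕜)).toLinearMap (by simp)

section FeasibleStrategy

variable {E : Type*} [AddCommGroup E] [Module ℂ E] {K : ℕ}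

theorem FeasibleStrategy.inf_inf_eq_bot {d : Fin K → ℕ} {V : Fin K → Submodule ℂ E}
    (h : FeasibleStrategy d V) {i j k : Fin K} (hji : j ≠ i) (hki : k ≠ i) (hjk : j ≠ k) :
    V i ⊓ V j ⊓ V k = ⊥ := by
  rw [inf_assoc, inf_inf_distrib_left, ← disjoint_iff]
  exact (h.2.1 i).1.pairwiseDisjoint (i := ⟨j, hji⟩) (j := ⟨k, hki⟩) (by simpa using hjk)

theorem feasibleStrategy_span_image {ι : Type*} [DecidableEq ι] (b : Basis ι ℂ E)
    (d : Fin K → ℕ) (S : Fin K → Finset ι) (hcard : ∀ i, (S i).card = d i)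
    (hdisj : ∀ i, Pairwise (Disjoint on fun j : {j : Fin K // j ≠ i} => S i ∩ S j))
    (hcover : ∀ i, ∀ x ∈ S i, ∃ j ≠ i, x ∈ S j)
    (hdisj' : Pairwise (Disjoint on fun p : {p : Fin K × Fin K // p.1 < p.2} => S p.1.1 ∩ S p.1.2))
    (hcover' : ∀ x, ∃ p : Fin K × Fin K, p.1 < p.2 ∧ x ∈ S p.1 ∧ x ∈ S p.2) :
    FeasibleStrategy d fun i => span ℂ (b '' S i) := by
  simp only [FeasibleStrategy, b.span_image_inf_span_image, iSup_span, ← Set.image_iUnion,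
    b.finrank_span_image, hcard, ← Finset.coe_inter]
  refine ⟨fun _ => trivial, fun i => ⟨?_, ?_⟩, ?_, ?_⟩
  · exact b.linearIndependent.iSupIndep_span_image fun j k hjk =>
      Finset.disjoint_coe.2 (hdisj i hjk)
  · congr 2
    ext x
    simp only [Finset.coe_inter, Set.mem_iUnion, Set.mem_inter_iff, Finset.mem_coe]
    refine ⟨fun hx => ?_, fun ⟨_, hx, _⟩ => hx⟩
    obtain ⟨j, hji, hxj⟩ := hcover i x hx
    exact ⟨⟨j, hji⟩, hx, hxj⟩
  · exact b.linearIndependent.iSupIndep_span_image fun p q hpq =>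
      Finset.disjoint_coe.2 (hdisj' hpq)
  · have hunion : ⋃ p : {p : Fin K × Fin K // p.1 < p.2}, (↑(S p.1.1 ∩ S p.1.2) : Set ι) =
        Set.univ := Set.eq_univ_of_forall fun x => by
      obtain ⟨p, hp, hx⟩ := hcover' x
      exact Set.mem_iUnion.2 ⟨⟨p, hp⟩, by simpa using hx⟩
    rw [hunion, Set.image_univ, b.span_eq]

end FeasibleStrategy

theorem stmt14_general (u : Fin 3 → EuclideanSpace ℂ (Fin 3)) :
    FeasibleStrategy (fun _ => 2) (fun i => (ℂ ∙ u i)ᗮ) ↔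
      Matrix.det (Matrix.of fun i j => u j i) ≠ 0 := by
  have hcard : Fintype.card (Fin 3) = finrank ℂ (EuclideanSpace ℂ (Fin 3)) := by simp
  rw [EuclideanSpace.det_ne_zero_iff_linearIndependent]
  constructor
  · intro h
    rw [linearIndependent_iff_iInf_orthogonal_eq_bot hcard, eq_bot_iff]
    calc ⨅ i, (ℂ ∙ u i)ᗮ ≤ (ℂ ∙ u 0)ᗮ ⊓ (ℂ ∙ u 1)ᗮ ⊓ (ℂ ∙ u 2)ᗮ :=
          le_inf (le_inf (iInf_le _ 0) (iInf_le _ 1)) (iInf_le _ 2)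
      _ = ⊥ := h.inf_inf_eq_bot (by decide) (by decide) (by decide)
  · intro hu
    set b := basisOfLinearIndependentOfCardEqFinrank hu hcard
    have hV : (fun i => (ℂ ∙ u i)ᗮ) =
        fun i => span ℂ (b.innerDual '' ↑({i}ᶜ : Finset (Fin 3))) := by
      ext1 i
      rw [Finset.coe_compl, Finset.coe_singleton, ← b.orthogonal_span_singleton,
        coe_basisOfLinearIndependentOfCardEqFinrank]
    rw [hV]
    exact feasibleStrategy_span_image _ _ _ (by decide) (by unfold Pairwise onFun; decide)
      (by decide) (by unfold Pairwise onFun; decide) (by decide)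

theorem stmt14 (u : Fin 3 → EuclideanSpace ℂ (Fin 3)) (hu : ∀ i, u i ≠ 0) :
    FeasibleStrategy (fun _ => 2) (fun i => (ℂ ∙ u i)ᗮ) ↔
      Matrix.det (Matrix.of fun i j => u j i) ≠ 0 :=
  stmt14_general u
end
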